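/- Let n be an odd positive integer and let (V, μ) be an n-ary partially associative algebra over a field K of characteristic zero. Then for all x_1,…,x_{3n−2} ∈ V, Σ_{1 ≤ p ≤ q−n ≤ n−1} μ(x_1,…,x_{p−1}, μ(x_p,…,x_{p+n−1}), x_{p+n},…,x_{q−1}, μ(x_q,…,x_{q+n−1}), x_{q+n},…,x_{3n−2}) = 0, where the sum is over pairs of integers (p,q) with 1 ≤ p, p + n ≤ q and q ≤ 2n − 1. -/

import Mathlib

/-!
Since `n` is odd, all signs in `μ • μ` are `+1`, so `∑ₛ μ ∘ₛ μ = 0`. Apply this to the sequence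
`insertAt n p μ x` for each position `p < 2n - 1` and sum over `p`. A term in which the two inner
windows are disjoint is a term of the target sum, and each such term arises exactly twice: once
with either window inserted first. The nested terms `μ ∘ₛ (μ ∘ᵣ μ)` sum to `∑ₛ μ ∘ₛ (μ • μ) = 0`
by multilinearity. Hence twice the target sum vanishes.
-/

/-- The extension of a multilinear `k`-cochain on `V` to a function on sequences,
using only the first `k` entries of the sequence. -/
def toCochain {K V : Type*} [Field K] [AddCommGroup V] [Module K V] {k : ℕ}
    (f : MultilinearMap K (fun _ : Fin k => V) V) : (ℕ → V) → V :=
  fun x => f fun j => x j.val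

/-- The Gerstenhaber product of a `k`-cochain and an `l`-cochain (cochains are
represented as functions on sequences depending only on the first `k`, resp. `l`, entries;
sequences are `0`-indexed, so the sign `(-1)^{(i-1)(l-1)}` of the paper, `1 ≤ i ≤ k`,
becomes `(-1)^{i(l-1)}`, `0 ≤ i ≤ k-1`). -/
def gerst {V : Type*} [AddCommGroup V] (k l : ℕ) (f g : (ℕ → V) → V) : (ℕ → V) → V :=
  fun x => ∑ i ∈ Finset.range k, ((-1 : ℤ) ^ (i * (l - 1))) •
    f fun j => if j < i then x j else if j = i then g (fun s => x (i + s)) else x (j + l - 1)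

/-- A term of the sum of Statement 3: `μ` evaluated on the sequence `x` in which
two disjoint `μ`-windows have been inserted, at the (0-indexed) argument slots
`p < q` of the outer `μ`; the window of the first inner `μ` starts at `x`-position `p`
and the window of the second inner `μ` starts at `x`-position `q + n - 1`. -/
def twoSub {V : Type*} (n : ℕ) (φ μ : (ℕ → V) → V) (p q : ℕ) : (ℕ → V) → V :=
  fun x => φ fun j =>
    if j < p then x j
    else if j = p then μ (fun s => x (p + s))
    else if j < q then x (j + n - 1)
    else if j = q then μ (fun s => x (j + n - 1 + s))
    else x (j + 2 * n - 2)

open Finset Function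

section Insertion

variable {V : Type*}

/-- `f (insertAt l i g x)` is the partial composition `(f ∘ᵢ g) x` of cochains. -/
def insertAt (l i : ℕ) (g : (ℕ → V) → V) (x : ℕ → V) : ℕ → V :=
  fun j => if j < i then x j else if j = i then g fun s => x (i + s) else x (j + l - 1)

lemma insertAt_insertAt_of_lt {k l p q : ℕ} {f g : (ℕ → V) → V}
    (hf : DependsOn f (Set.Iio k)) (hpq : p < q) (x : ℕ → V) :
    insertAt l q g (insertAt k p f x) = insertAt k p f (insertAt l (q + k - 1) g x) := by
  funext j
  simp only [insertAt]
  split_ifs <;> first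
    | omega
    | exact congrArg x (by omega)
    | exact hf fun s (hs : s < k) => by split_ifs <;> first | omega | rfl
    | exact congrArg g (funext fun s => by
        split_ifs <;> first | omega | exact congrArg x (by omega))

lemma insertAt_insertAt_of_le_of_lt {k l p q : ℕ} (f g : (ℕ → V) → V)
    (hqp : q ≤ p) (hpq : p < q + l) (x : ℕ → V) :
    insertAt l q g (insertAt k p f x) =
      insertAt (l + k - 1) q (fun y => g (insertAt k (p - q) f y)) x := by
  funext j
  simp only [insertAt]
  split_ifs <;> first
    | omega
    | exact congrArg x (by omega)
    | exact congrArg g (funext fun s => by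
        simp only [insertAt]
        split_ifs <;> first
          | omega
          | exact congrArg x (by omega)
          | exact congrArg f (funext fun t => congrArg x (by omega)))

end Insertion

lemma gerst_apply_of_odd {V : Type*} [AddCommGroup V] {k l : ℕ} (hl : Odd l)
    (f g : (ℕ → V) → V) (x : ℕ → V) :
    gerst k l f g x = ∑ i ∈ range k, f (insertAt l i g x) := by
  refine sum_congr rfl fun i _ => ?_
  rw [(Nat.Odd.sub_odd hl odd_one).mul_left i |>.neg_one_pow, one_smul]
  rfl

lemma twoSub_apply {V : Type*} {n p q : ℕ} (φ μ : (ℕ → V) → V) (hpq : p < q) (x : ℕ → V) :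
    twoSub n φ μ p q x = φ (insertAt n q μ (insertAt n p μ x)) := by
  refine congrArg φ (funext fun j => ?_)
  simp only [insertAt]
  split_ifs <;> first
    | omega
    | rfl
    | exact congrArg x (by omega)
    | exact congrArg μ (funext fun s => by
        split_ifs <;> first | omega | exact congrArg x (by omega))

section Multilinear

variable {K V ι : Type*} [Field K] [AddCommGroup V] [Module K V] {k : ℕ}
  (μ : MultilinearMap K (fun _ : Fin k => V) V)

lemma dependsOn_toCochain : DependsOn (toCochain μ) (Set.Iio k) :=
  fun _ _ h => congrArg μ (funext fun j => h j j.isLt)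

lemma toCochain_insertAt {m q : ℕ} (hq : q < k) (h : (ℕ → V) → V) (x : ℕ → V) :
    toCochain μ (insertAt m q h x) =
      μ (update (fun j : Fin k => insertAt m q 0 x j) ⟨q, hq⟩ (h fun s => x (q + s))) := by
  refine congrArg μ (funext fun j => ?_)
  simp only [update_apply, Fin.ext_iff, insertAt]
  split_ifs <;> first | omega | rfl

lemma sum_toCochain_insertAt_eq_zero {m q : ℕ} (hq : q < k) {s : Finset ι}
    {h : ι → (ℕ → V) → V} (hs : ∑ r ∈ s, h r = 0) (x : ℕ → V) :
    ∑ r ∈ s, toCochain μ (insertAt m q (h r) x) = 0 := by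
  classical
  simp_rw [toCochain_insertAt μ hq, ← μ.map_update_sum, ← Finset.sum_apply, hs]
  exact μ.map_update_zero _ _

end Multilinear

section PartiallyAssociative

variable {K V : Type*} [Field K] [AddCommGroup V] [Module K V] {n : ℕ}
  {μ : MultilinearMap K (fun _ : Fin n => V) V}

lemma sum_toCochain_insertAt_toCochain_eq_zero (hn : Odd n)
    (hμ : gerst n n (toCochain μ) (toCochain μ) = 0) (x : ℕ → V) :
    ∑ s ∈ range n, toCochain μ (insertAt n s (toCochain μ) x) = 0 := by
  rw [← gerst_apply_of_odd hn, hμ, Pi.zero_apply]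

lemma sum_toCochain_insertAt_comp_eq_zero (hn : Odd n)
    (hμ : gerst n n (toCochain μ) (toCochain μ) = 0) {q : ℕ} (hq : q < n) (x : ℕ → V) :
    ∑ r ∈ range n, toCochain μ
      (insertAt (n + n - 1) q (fun y => toCochain μ (insertAt n r (toCochain μ) y)) x) = 0 :=
  sum_toCochain_insertAt_eq_zero μ hq
    (funext fun y => by
      rw [Finset.sum_apply, sum_toCochain_insertAt_toCochain_eq_zero hn hμ, Pi.zero_apply]) x

lemma sum_range_toCochain_insertAt_insertAt {s : ℕ} (hs : s < n) (x : ℕ → V) :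
    ∑ p ∈ range (n + n - 1),
        toCochain μ (insertAt n s (toCochain μ) (insertAt n p (toCochain μ) x)) =
      ∑ p ∈ range s, twoSub n (toCochain μ) (toCochain μ) p s x +
      ∑ r ∈ range n, toCochain μ
        (insertAt (n + n - 1) s (fun y => toCochain μ (insertAt n r (toCochain μ) y)) x) +
      ∑ q ∈ Ico (s + 1) n, twoSub n (toCochain μ) (toCochain μ) s q x := by
  set μ' := toCochain μ
  rw [← sum_range_add_sum_Ico _ (show s ≤ n + n - 1 by omega),
    ← sum_Ico_consecutive _ (show s ≤ s + n by omega) (show s + n ≤ n + n - 1 by omega),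
    ← add_assoc]
  refine congrArg₂ (· + ·) (congrArg₂ (· + ·) ?_ ?_) ?_
  · exact sum_congr rfl fun p hp => (twoSub_apply μ' μ' (mem_range.mp hp) x).symm
  · rw [sum_Ico_eq_sum_range, add_tsub_cancel_left]
    refine sum_congr rfl fun r hr => ?_
    rw [insertAt_insertAt_of_le_of_lt _ _ (by omega) (by have := mem_range.mp hr; omega),
      add_tsub_cancel_left]
  · rw [show s + n = s + 1 + (n - 1) by omega, show n + n - 1 = n + (n - 1) by omega,
      ← sum_Ico_add']
    refine sum_congr rfl fun q hq => ?_
    rw [twoSub_apply μ' μ' (mem_Ico.mp hq).1,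
      insertAt_insertAt_of_lt (dependsOn_toCochain μ) (mem_Ico.mp hq).1,
      add_tsub_assoc_of_le (by omega : 1 ≤ n)]

end PartiallyAssociative

theorem mu_theta_mu_eq_zero_of_odd_general {K V : Type*} [Field K] [CharZero K]
    [AddCommGroup V] [Module K V]
    (n : ℕ) (hn : Odd n)
    (μ : MultilinearMap K (fun _ : Fin n => V) V)
    (hμ : gerst n n (toCochain μ) (toCochain μ) = 0) :
    ∑ q ∈ Finset.range n, ∑ p ∈ Finset.range q,
        twoSub n (toCochain μ) (toCochain μ) p q = 0 := by
  funext x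
  simp only [Finset.sum_apply, Pi.zero_apply]
  set T := ∑ q ∈ range n, ∑ p ∈ range q, twoSub n (toCochain μ) (toCochain μ) p q x
  have hcount : ∑ s ∈ range n, ∑ p ∈ range (n + n - 1),
      toCochain μ (insertAt n s (toCochain μ) (insertAt n p (toCochain μ) x)) = T + T := by
    rw [sum_congr rfl fun s hs => sum_range_toCochain_insertAt_insertAt (mem_range.mp hs) x,
      sum_add_distrib, sum_add_distrib,
      sum_eq_zero fun s hs => sum_toCochain_insertAt_comp_eq_zero hn hμ (mem_range.mp hs) x,
      add_zero]
    congr 1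
    exact sum_comm' fun s q => by simp only [mem_range, mem_Ico]; omega
  have hzero : T + T = 0 := by
    rw [← hcount, sum_comm]
    exact sum_eq_zero fun p _ => sum_toCochain_insertAt_toCochain_eq_zero hn hμ _
  have h2T : (2 : K) • T = 0 := by rwa [two_smul]
  exact (smul_eq_zero.mp h2T).resolve_left two_ne_zero

/-- if `n` is odd and `(V, μ)` is an `n`-ary partially associative algebra,
then `Σ_{1 ≤ p ≤ q−n ≤ n−1} μ(x_1,…, μ(x_p,…,x_{p+n−1}), …, μ(x_q,…,x_{q+n−1}), …, x_{3n−2}) = 0`. -/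
theorem mu_theta_mu_eq_zero_of_odd {K V : Type*} [Field K] [CharZero K]
    [AddCommGroup V] [Module K V]
    (n : ℕ) (hn : Odd n) (hn' : 1 ≤ n)
    (μ : MultilinearMap K (fun _ : Fin n => V) V)
    (hμ : gerst n n (toCochain μ) (toCochain μ) = 0) :
    ∑ q ∈ Finset.range n, ∑ p ∈ Finset.range q,
        twoSub n (toCochain μ) (toCochain μ) p q = 0 :=
  mu_theta_mu_eq_zero_of_odd_general n hn μ hμ
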